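/- arXiv:2605.17394 — 2 statements merged into one kernel-verified Lean document; each statement's English description precedes it below -/
import Mathlib

section
/- Let Z be a real-valued random variable and suppose there exist S > 0 and p ∈ (1,2] such that P(|Z| > t) ≤ 2^(2p+1) S^p t^(-p) for all t ≥ 4S. Then for every τ ≥ 4S, the clipped second moment satisfies E[ψ_τ(Z)^2] ≤ 64 S^p τ^(2−p) (1 + log(τ/S)), where ψ_τ(z) = sgn(z) min{|z|, τ}. -/
open MeasureTheory Real

/-- Scalar clipping operator `ψ_τ(z) = sgn(z) · min{|z|, τ}`. -/
noncomputable def clipScalar (τ z : ℝ) : ℝ := Real.sign z * min |z| τ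

theorem clipped_second_moment_weak_Lp {Ω : Type*} [MeasurableSpace Ω]
    (μ : Measure Ω) [IsProbabilityMeasure μ]
    (Z : Ω → ℝ) (hZ : Measurable Z)
    (S p : ℝ) (hS : 0 < S) (hp1 : 1 < p) (hp2 : p ≤ 2)
    (htail : ∀ t : ℝ, 4 * S ≤ t →
      μ {ω | t < |Z ω|} ≤ ENNReal.ofReal (2 ^ (2 * p + 1) * S ^ p * t ^ (-p)))
    (τ : ℝ) (hτ : 4 * S ≤ τ) :
    ∫⁻ ω, ENNReal.ofReal ((clipScalar τ (Z ω)) ^ 2) ∂μ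
      ≤ ENNReal.ofReal (64 * S ^ p * τ ^ (2 - p) * (1 + Real.log (τ / S))) := by
  have hS4 : (0:ℝ) < 4 * S := by positivity
  have hτ0 : 0 < τ := lt_of_lt_of_le hS4 hτ
  set C : ℝ := 2 ^ (2 * p + 1) * S ^ p with hCdef
  have hC0 : 0 ≤ C := by positivity
  set f : Ω → ℝ := fun ω => min |Z ω| τ with hfdef
  have hf_m : Measurable f := hZ.abs.min measurable_const
  have hf_nn : ∀ ω, 0 ≤ f ω := fun ω => le_min (abs_nonneg _) hτ0.le
  -- pointwise identity
  have hsq : ∀ z : ℝ, (clipScalar τ z) ^ 2 = (min |z| τ) ^ ((2:ℕ):ℝ) := by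
    intro z
    rw [Real.rpow_natCast]
    unfold clipScalar
    rcases lt_trichotomy z 0 with h | h | h
    · rw [Real.sign_of_neg h]; ring
    · simp [h, min_eq_left hτ0.le]
    · rw [Real.sign_of_pos h]; ring
  have hLHS : ∫⁻ ω, ENNReal.ofReal ((clipScalar τ (Z ω)) ^ 2) ∂μ
      = ∫⁻ ω, ENNReal.ofReal (f ω ^ ((2:ℕ):ℝ)) ∂μ := by
    congr 1; funext ω; rw [hsq]
  have layer := lintegral_rpow_eq_lintegral_meas_lt_mul μ
      (Filter.Eventually.of_forall hf_nn) hf_m.aemeasurable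
      (show (0:ℝ) < ((2:ℕ):ℝ) by norm_num)
  rw [hLHS, layer]
  have hexp : ∀ t : ℝ, t ∈ Set.Ioi (0:ℝ) →
      μ {a | t < f a} * ENNReal.ofReal (t ^ (((2:ℕ):ℝ) - 1)) = μ {a | t < f a} * ENNReal.ofReal t := by
    intro t ht
    congr 2
    rw [show (((2:ℕ):ℝ) - 1) = (1:ℝ) by norm_num, Real.rpow_one]
  rw [setLIntegral_congr_fun measurableSet_Ioi hexp]
  -- split the integration domain
  have hsplit1 : Set.Ioi (0:ℝ) = Set.Ioc 0 (4*S) ∪ Set.Ioi (4*S) := (Set.Ioc_union_Ioi_eq_Ioi hS4.le).symm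
  have hsplit2 : Set.Ioi (4*S) = Set.Ioc (4*S) τ ∪ Set.Ioi τ := (Set.Ioc_union_Ioi_eq_Ioi hτ).symm
  rw [hsplit1, lintegral_union measurableSet_Ioi (Set.Ioc_disjoint_Ioi le_rfl),
      hsplit2, lintegral_union measurableSet_Ioi (Set.Ioc_disjoint_Ioi le_rfl)]
  -- the piece beyond τ vanishes
  have hzero : ∫⁻ t in Set.Ioi τ, μ {a | t < f a} * ENNReal.ofReal t = 0 := by
    have h0 : ∀ t ∈ Set.Ioi τ, μ {a | t < f a} * ENNReal.ofReal t = 0 := by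
      intro t ht
      have : {a | t < f a} = ∅ := by
        ext a
        simp only [Set.mem_setOf_eq, Set.mem_empty_iff_false, iff_false, not_lt]
        exact (min_le_right _ _).trans (le_of_lt ht)
      simp [this]
    rw [setLIntegral_congr_fun measurableSet_Ioi h0]
    simp
  rw [hzero, add_zero]
  -- first piece
  have hI1 : ∫⁻ t in Set.Ioc (0:ℝ) (4*S), μ {a | t < f a} * ENNReal.ofReal t
      ≤ ENNReal.ofReal (8 * S ^ 2) := by
    calc ∫⁻ t in Set.Ioc (0:ℝ) (4*S), μ {a | t < f a} * ENNReal.ofReal t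
        ≤ ∫⁻ t in Set.Ioc (0:ℝ) (4*S), ENNReal.ofReal t := by
          apply setLIntegral_mono ENNReal.measurable_ofReal
          intro t _
          calc μ {a | t < f a} * ENNReal.ofReal t ≤ 1 * ENNReal.ofReal t :=
                mul_le_mul_left prob_le_one _
            _ = ENNReal.ofReal t := one_mul _
      _ = ENNReal.ofReal (∫ t in Set.Ioc (0:ℝ) (4*S), t) := by
          rw [← ofReal_integral_eq_lintegral_ofReal]
          · apply IntegrableOn.mono_set _ Set.Ioc_subset_Icc_self
            exact ContinuousOn.integrableOn_Icc continuousOn_id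
          · filter_upwards [self_mem_ae_restrict (measurableSet_Ioc :
              MeasurableSet (Set.Ioc (0:ℝ) (4*S)))] with t ht
            exact ht.1.le
      _ = ENNReal.ofReal (8 * S ^ 2) := by
          rw [← intervalIntegral.integral_of_le hS4.le, integral_id]
          ring_nf
  -- second piece
  have hI2 : ∫⁻ t in Set.Ioc (4*S) τ, μ {a | t < f a} * ENNReal.ofReal t
      ≤ ENNReal.ofReal (C * τ ^ (2 - p) * Real.log (τ / (4 * S))) := by
    calc ∫⁻ t in Set.Ioc (4*S) τ, μ {a | t < f a} * ENNReal.ofReal t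
        ≤ ∫⁻ t in Set.Ioc (4*S) τ, ENNReal.ofReal (C * τ ^ (2 - p) * t⁻¹) := by
          apply setLIntegral_mono ((measurable_const.mul measurable_inv).ennreal_ofReal)
          intro t ht
          have ht0 : 0 < t := lt_trans hS4 ht.1
          have hsub : {a | t < f a} ⊆ {a | t < |Z a|} := by
            intro a ha
            simp only [Set.mem_setOf_eq] at ha ⊢
            exact lt_of_lt_of_le ha (min_le_left _ _)
          calc μ {a | t < f a} * ENNReal.ofReal t
              ≤ ENNReal.ofReal (C * t ^ (-p)) * ENNReal.ofReal t :=
                mul_le_mul_left ((measure_mono hsub).trans (htail t ht.1.le)) _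
            _ = ENNReal.ofReal (C * t ^ (-p) * t) := by
                rw [← ENNReal.ofReal_mul (by positivity)]
            _ ≤ ENNReal.ofReal (C * τ ^ (2 - p) * t⁻¹) := by
                apply ENNReal.ofReal_le_ofReal
                have h1 : t ^ (-p) * t = t ^ (2 - p) * t⁻¹ := by
                  rw [← Real.rpow_neg_one t, ← Real.rpow_add ht0,
                      show (2 - p) + (-1:ℝ) = -p + 1 by ring, Real.rpow_add ht0,
                      Real.rpow_one]
                calc C * t ^ (-p) * t = C * (t ^ (2-p) * t⁻¹) := by rw [mul_assoc, h1]
                  _ ≤ C * (τ ^ (2-p) * t⁻¹) := by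
                      apply mul_le_mul_of_nonneg_left _ hC0
                      exact mul_le_mul_of_nonneg_right
                        (Real.rpow_le_rpow ht0.le ht.2 (by linarith)) (by positivity)
                  _ = C * τ ^ (2 - p) * t⁻¹ := by ring
      _ = ENNReal.ofReal (∫ t in Set.Ioc (4*S) τ, C * τ ^ (2 - p) * t⁻¹) := by
          rw [← ofReal_integral_eq_lintegral_ofReal]
          · apply IntegrableOn.mono_set _ Set.Ioc_subset_Icc_self
            apply ContinuousOn.integrableOn_Icc
            apply continuousOn_const.mul
            exact ContinuousOn.inv₀ continuousOn_id
              (fun x hx => ne_of_gt (lt_of_lt_of_le hS4 hx.1))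
          · filter_upwards [self_mem_ae_restrict (measurableSet_Ioc :
              MeasurableSet (Set.Ioc (4*S) τ))] with t ht
            have : 0 < t := lt_trans hS4 ht.1
            positivity
      _ = ENNReal.ofReal (C * τ ^ (2 - p) * Real.log (τ / (4 * S))) := by
          congr 1
          rw [← intervalIntegral.integral_of_le hτ, intervalIntegral.integral_const_mul,
              integral_inv_of_pos hS4 hτ0]
  -- combine
  calc ENNReal.ofReal ((2:ℕ):ℝ) *
        ((∫⁻ t in Set.Ioc (0:ℝ) (4*S), μ {a | t < f a} * ENNReal.ofReal t)
          + ∫⁻ t in Set.Ioc (4*S) τ, μ {a | t < f a} * ENNReal.ofReal t)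
      ≤ ENNReal.ofReal ((2:ℕ):ℝ) *
        (ENNReal.ofReal (8 * S ^ 2) + ENNReal.ofReal (C * τ ^ (2 - p) * Real.log (τ / (4 * S)))) :=
        mul_le_mul_right (add_le_add hI1 hI2) _
    _ = ENNReal.ofReal (2 * (8 * S ^ 2 + C * τ ^ (2 - p) * Real.log (τ / (4 * S)))) := by
        rw [← ENNReal.ofReal_add (by positivity)
              (mul_nonneg (mul_nonneg hC0 (Real.rpow_nonneg hτ0.le _))
                (Real.log_nonneg ((one_le_div hS4).2 hτ))),
            ← ENNReal.ofReal_mul (by norm_num)]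
        norm_num
    _ ≤ ENNReal.ofReal (64 * S ^ p * τ ^ (2 - p) * (1 + Real.log (τ / S))) := by
        apply ENNReal.ofReal_le_ofReal
        have hSτ : S ≤ τ := by linarith
        have hA0 : 0 < S ^ p * τ ^ (2 - p) :=
          mul_pos (Real.rpow_pos_of_pos hS p) (Real.rpow_pos_of_pos hτ0 _)
        have h1 : S ^ (2:ℝ) ≤ S ^ p * τ ^ (2 - p) := by
          have he : S ^ (2:ℝ) = S ^ p * S ^ (2 - p) := by
            rw [← Real.rpow_add hS]; norm_num
          rw [he]
          exact mul_le_mul_of_nonneg_left (Real.rpow_le_rpow hS.le hSτ (by linarith))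
            (Real.rpow_nonneg hS.le p)
        have h1' : S ^ 2 ≤ S ^ p * τ ^ (2 - p) := by
          rwa [show S ^ (2:ℝ) = S ^ (2:ℕ) by rw [← Real.rpow_natCast S 2]; norm_num] at h1
        have h2 : (2:ℝ) * 2 ^ (2 * p + 1) ≤ 64 := by
          rw [show (2:ℝ) * 2 ^ (2*p+1) = 2 ^ (1:ℝ) * 2 ^ (2*p+1) by rw [Real.rpow_one],
              ← Real.rpow_add (by norm_num)]
          calc (2:ℝ) ^ (1 + (2*p+1)) ≤ 2 ^ (6:ℝ) :=
                Real.rpow_le_rpow_of_exponent_le (by norm_num) (by linarith)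
            _ = 64 := by
                rw [show (6:ℝ) = ((6:ℕ):ℝ) by norm_num, Real.rpow_natCast]; norm_num
        have hlog1 : 0 ≤ Real.log (τ / (4*S)) :=
          Real.log_nonneg ((one_le_div hS4).2 hτ)
        have hlog2 : Real.log (τ / (4*S)) ≤ Real.log (τ / S) := by
          apply Real.log_le_log (by positivity)
          apply div_le_div_of_nonneg_left hτ0.le hS (by linarith)
        have hrw : 64 * S ^ p * τ ^ (2-p) * (1 + Real.log (τ/S))
            = 64 * (S ^ p * τ ^ (2-p)) + 64 * (S ^ p * τ ^ (2-p)) * Real.log (τ/S) := by ring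
        rw [hrw]
        have hterm2 : 2 * (C * τ ^ (2-p) * Real.log (τ/(4*S)))
            ≤ 64 * (S ^ p * τ ^ (2-p)) * Real.log (τ/S) := by
          rw [hCdef]
          calc 2 * (2 ^ (2*p+1) * S ^ p * τ ^ (2-p) * Real.log (τ/(4*S)))
              = (2 * 2 ^ (2*p+1)) * (S ^ p * τ ^ (2-p)) * Real.log (τ/(4*S)) := by ring
            _ ≤ 64 * (S ^ p * τ ^ (2-p)) * Real.log (τ/(4*S)) := by
                apply mul_le_mul_of_nonneg_right _ hlog1
                exact mul_le_mul_of_nonneg_right h2 hA0.le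
            _ ≤ 64 * (S ^ p * τ ^ (2-p)) * Real.log (τ/S) := by
                apply mul_le_mul_of_nonneg_left hlog2 (by positivity)
        have h3 : 16 * S ^ 2 ≤ 64 * (S ^ p * τ ^ (2 - p)) := by
          linarith only [h1', hA0]
        linarith only [h3, hterm2, hrw ▸ le_refl (64 * S ^ p * τ ^ (2-p) * (1 + Real.log (τ/S)))]
end

section
/- Let f : ℝ^d → ℝ be L-smooth and bounded below by f_*, and let x satisfy f(x) − f_* ≤ 4Δ̄ for some Δ̄ > 0. Let u be uniform on S^{d−1}, p ∈ (1,2], and μ > 0. Then for every s ≥ 1, P(|D_μ f(x,u)| > (√(8LΔ̄)/√d + Lμ) s) ≤ s^{-p}, where D_μ f(x,u) := (f(x+μu) − f(x−μu))/(2μ). -/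
open MeasureTheory
local notation "⟪" x ", " y "⟫_ℝ" => @inner ℝ _ _ x y


variable {E : Type*} [NormedAddCommGroup E] [InnerProductSpace ℝ E] [CompleteSpace E]

lemma my_taylor (f : E → ℝ) (L : ℝ) (hL : 0 ≤ L)
    (hdiff : Differentiable ℝ f)
    (hLip : ∀ x y, ‖gradient f x - gradient f y‖ ≤ L * ‖x - y‖)
    (x v : E) :
    |f (x + v) - f x - ⟪gradient f x, v⟫_ℝ| ≤ L / 2 * ‖v‖ ^ 2 := by
  set g := gradient f x with hg
  have hgc : Continuous (gradient f) := by
    have : LipschitzWith (Real.toNNReal L) (gradient f) := by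
      apply LipschitzWith.of_dist_le_mul
      intro a b
      rw [dist_eq_norm, dist_eq_norm, Real.coe_toNNReal L hL]
      exact hLip a b
    exact this.continuous
  have key : ∀ t : ℝ, HasDerivAt (fun t : ℝ => f (x + t • v))
      ⟪gradient f (x + t • v), v⟫_ℝ t := by
    intro t
    have h1 : HasDerivAt (fun t : ℝ => x + t • v) v t := by
      simpa using ((hasDerivAt_id t).smul_const v).const_add x
    have h2 : HasFDerivAt f ((InnerProductSpace.toDual ℝ E) (gradient f (x + t • v)))
        (x + t • v) := (hdiff _).hasGradientAt
    simpa [InnerProductSpace.toDual_apply_apply, Function.comp_def] using (h2.comp_hasDerivAt t h1)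
  have hcont : Continuous fun t : ℝ => ⟪gradient f (x + t • v), v⟫_ℝ := by
    exact (hgc.comp (by continuity)).inner continuous_const
  have hint : ∫ t in (0:ℝ)..1, ⟪gradient f (x + t • v), v⟫_ℝ = f (x + v) - f x := by
    have := intervalIntegral.integral_eq_sub_of_hasDerivAt (f := fun t : ℝ => f (x + t • v))
      (fun t _ => key t) (hcont.intervalIntegrable 0 1)
    simpa using this
  have heq : f (x + v) - f x - ⟪g, v⟫_ℝ
      = ∫ t in (0:ℝ)..1, (⟪gradient f (x + t • v), v⟫_ℝ - ⟪g, v⟫_ℝ) := by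
    rw [intervalIntegral.integral_sub (hcont.intervalIntegrable 0 1)
      (intervalIntegrable_const)]
    rw [hint]
    simp
  rw [heq]
  have hb : ∀ t ∈ Set.uIoc (0:ℝ) 1,
      ‖⟪gradient f (x + t • v), v⟫_ℝ - ⟪g, v⟫_ℝ‖ ≤ L * ‖v‖ ^ 2 * t := by
    intro t ht
    rw [Set.uIoc_of_le (by norm_num : (0:ℝ) ≤ 1)] at ht
    have ht0 : 0 < t := ht.1
    have ht1 : t ≤ 1 := ht.2
    have h1 : ⟪gradient f (x + t • v), v⟫_ℝ - ⟪g, v⟫_ℝ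
        = ⟪gradient f (x + t • v) - g, v⟫_ℝ := by rw [inner_sub_left]
    rw [h1, Real.norm_eq_abs]
    calc |⟪gradient f (x + t • v) - g, v⟫_ℝ| ≤ ‖gradient f (x + t • v) - g‖ * ‖v‖ :=
          abs_real_inner_le_norm _ _
      _ ≤ (L * ‖x + t • v - x‖) * ‖v‖ := by
          apply mul_le_mul_of_nonneg_right _ (norm_nonneg v)
          exact hLip _ _
      _ = L * ‖v‖ ^ 2 * t := by
          rw [show x + t • v - x = t • v by abel, norm_smul, Real.norm_eq_abs,
            abs_of_pos ht0]
          ring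
  calc |∫ t in (0:ℝ)..1, (⟪gradient f (x + t • v), v⟫_ℝ - ⟪g, v⟫_ℝ)|
      = ‖∫ t in (0:ℝ)..1, (⟪gradient f (x + t • v), v⟫_ℝ - ⟪g, v⟫_ℝ)‖ :=
        (Real.norm_eq_abs _).symm
    _ ≤ |∫ t in (0:ℝ)..1, L * ‖v‖ ^ 2 * t| := by
        apply intervalIntegral.norm_integral_le_abs_of_norm_le
        · exact (ae_restrict_iff' measurableSet_uIoc).2 (Filter.Eventually.of_forall hb)
        · exact (by continuity : Continuous fun t : ℝ => L * ‖v‖ ^ 2 * t).intervalIntegrable 0 1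
    _ = L / 2 * ‖v‖ ^ 2 := by
        rw [intervalIntegral.integral_const_mul, integral_id, abs_of_nonneg (by positivity)]
        ring

lemma my_gradsq (f : E → ℝ) (L : ℝ) (hL : 0 < L)
    (hdiff : Differentiable ℝ f)
    (hLip : ∀ x y, ‖gradient f x - gradient f y‖ ≤ L * ‖x - y‖)
    (hbdd : BddBelow (Set.range f)) (x : E) :
    ‖gradient f x‖ ^ 2 ≤ 2 * L * (f x - sInf (Set.range f)) := by
  set g := gradient f x with hg
  have ht := my_taylor f L hL.le hdiff hLip x (-(L⁻¹ • g))
  have hinner : ⟪g, -(L⁻¹ • g)⟫_ℝ = -(L⁻¹ * ‖g‖ ^ 2) := by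
    rw [inner_neg_right, real_inner_smul_right, real_inner_self_eq_norm_sq]
  have hnorm : ‖-(L⁻¹ • g)‖ ^ 2 = L⁻¹ ^ 2 * ‖g‖ ^ 2 := by
    rw [norm_neg, norm_smul, Real.norm_eq_abs, abs_of_pos (by positivity), mul_pow]
  rw [hinner, hnorm] at ht
  have hInf : sInf (Set.range f) ≤ f (x + -(L⁻¹ • g)) := csInf_le hbdd ⟨_, rfl⟩
  have habs := (abs_le.1 ht).2
  have hLpos : (0:ℝ) < L⁻¹ := by positivity
  have hLL : L * L⁻¹ = 1 := mul_inv_cancel₀ hL.ne'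
  have h2 : L⁻¹ * ‖g‖ ^ 2 / 2 ≤ f x - sInf (Set.range f) := by nlinarith [hLL]
  have h3 := mul_le_mul_of_nonneg_left h2 (by positivity : (0:ℝ) ≤ 2 * L)
  nlinarith [hLL, sq_nonneg ‖g‖]

variable {d : ℕ}

lemma ae_sphere (ν : Measure (EuclideanSpace ℝ (Fin d))) [IsProbabilityMeasure ν]
    (hsupp : ν (Metric.sphere (0 : EuclideanSpace ℝ (Fin d)) 1) = 1) :
    ∀ᵐ u ∂ν, ‖u‖ = 1 := by
  have hms : MeasurableSet (Metric.sphere (0 : EuclideanSpace ℝ (Fin d)) 1) :=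
    (Metric.isClosed_sphere).measurableSet
  have hcompl : ν (Metric.sphere (0 : EuclideanSpace ℝ (Fin d)) 1)ᶜ = 0 := by
    rw [measure_compl hms (measure_ne_top _ _), hsupp, measure_univ, tsub_self]
  rw [MeasureTheory.ae_iff]
  convert hcompl using 2
  ext u
  simp [Metric.mem_sphere, dist_eq_norm]

lemma integrable_inner_sq (ν : Measure (EuclideanSpace ℝ (Fin d))) [IsProbabilityMeasure ν]
    (hsupp : ν (Metric.sphere (0 : EuclideanSpace ℝ (Fin d)) 1) = 1)
    (a : EuclideanSpace ℝ (Fin d)) :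
    Integrable (fun u => ⟪a, u⟫_ℝ ^ 2) ν := by
  apply (integrable_const (‖a‖ ^ 2)).mono'
  · exact ((continuous_const.inner continuous_id).pow 2).aestronglyMeasurable
  · filter_upwards [ae_sphere ν hsupp] with u hu
    rw [Real.norm_eq_abs, abs_of_nonneg (sq_nonneg _)]
    calc ⟪a, u⟫_ℝ ^ 2 = |⟪a, u⟫_ℝ| ^ 2 := (sq_abs _).symm
      _ ≤ (‖a‖ * ‖u‖) ^ 2 := pow_le_pow_left₀ (abs_nonneg _) (abs_real_inner_le_norm a u) 2
      _ = ‖a‖ ^ 2 := by rw [hu]; ring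

lemma inner_sq_int_eq (ν : Measure (EuclideanSpace ℝ (Fin d))) [IsProbabilityMeasure ν]
    (hsupp : ν (Metric.sphere (0 : EuclideanSpace ℝ (Fin d)) 1) = 1)
    (hrot : ∀ O : (EuclideanSpace ℝ (Fin d)) ≃ₗᵢ[ℝ] (EuclideanSpace ℝ (Fin d)),
      Measure.map O ν = ν)
    (a b : EuclideanSpace ℝ (Fin d)) (ha : ‖a‖ = 1) (hb : ‖b‖ = 1) :
    ∫ u, ⟪a, u⟫_ℝ ^ 2 ∂ν = ∫ u, ⟪b, u⟫_ℝ ^ 2 ∂ν := by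
  set O := Submodule.reflection (ℝ ∙ (a - b))ᗮ with hO
  have hOa : O a = b := Submodule.reflection_sub (ha.trans hb.symm)
  have hkey : ∀ u, ⟪b, u⟫_ℝ = ⟪a, O u⟫_ℝ := by
    intro u
    have h1 : ⟪O a, O (O u)⟫_ℝ = ⟪a, O u⟫_ℝ := O.inner_map_map a (O u)
    rwa [Submodule.reflection_reflection, hOa] at h1
  have hmeas : AEMeasurable (O : EuclideanSpace ℝ (Fin d) → EuclideanSpace ℝ (Fin d)) ν :=
    (O.continuous.measurable).aemeasurable
  calc ∫ u, ⟪a, u⟫_ℝ ^ 2 ∂ν = ∫ u, ⟪a, u⟫_ℝ ^ 2 ∂(Measure.map O ν) := by rw [hrot O]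
    _ = ∫ u, ⟪a, O u⟫_ℝ ^ 2 ∂ν := by
        rw [integral_map hmeas]
        exact ((continuous_const.inner continuous_id).pow 2).aestronglyMeasurable
    _ = ∫ u, ⟪b, u⟫_ℝ ^ 2 ∂ν := by simp_rw [hkey]

lemma second_moment (hd : 0 < d) (ν : Measure (EuclideanSpace ℝ (Fin d)))
    [IsProbabilityMeasure ν]
    (hsupp : ν (Metric.sphere (0 : EuclideanSpace ℝ (Fin d)) 1) = 1)
    (hrot : ∀ O : (EuclideanSpace ℝ (Fin d)) ≃ₗᵢ[ℝ] (EuclideanSpace ℝ (Fin d)),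
      Measure.map O ν = ν)
    (g : EuclideanSpace ℝ (Fin d)) :
    ∫ u, ⟪g, u⟫_ℝ ^ 2 ∂ν = ‖g‖ ^ 2 / d := by
  rcases eq_or_ne g 0 with rfl | hg
  · simp
  · set a : EuclideanSpace ℝ (Fin d) := ‖g‖⁻¹ • g with haa
    have hgn : (0:ℝ) < ‖g‖ := norm_pos_iff.2 hg
    have ha : ‖a‖ = 1 := by
      rw [haa, norm_smul, Real.norm_eq_abs, abs_of_pos (by positivity)]
      field_simp
    have hga : g = ‖g‖ • a := by rw [haa, smul_smul, mul_inv_cancel₀ hgn.ne', one_smul]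
    have hsplit : ∀ u, ⟪g, u⟫_ℝ ^ 2 = ‖g‖ ^ 2 * ⟪a, u⟫_ℝ ^ 2 := by
      intro u
      have h1 : ⟪a, u⟫_ℝ = ‖g‖⁻¹ * ⟪g, u⟫_ℝ := by rw [haa, real_inner_smul_left]
      rw [h1]
      field_simp
    simp_rw [hsplit]
    rw [integral_const_mul]
    have key : (d : ℝ) * ∫ u, ⟪a, u⟫_ℝ ^ 2 ∂ν = 1 := by
      have basis_eq : ∀ i : Fin d, ∫ u, ⟪(EuclideanSpace.single i (1:ℝ)), u⟫_ℝ ^ 2 ∂ν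
          = ∫ u, ⟪a, u⟫_ℝ ^ 2 ∂ν := by
        intro i
        exact inner_sq_int_eq ν hsupp hrot _ a (by simp) ha
      have hsum : ∑ i : Fin d, ∫ u, ⟪(EuclideanSpace.single i (1:ℝ)), u⟫_ℝ ^ 2 ∂ν = 1 := by
        rw [← integral_finset_sum _ (fun i _ => integrable_inner_sq ν hsupp _)]
        have : ∀ᵐ u ∂ν, ∑ i : Fin d, ⟪(EuclideanSpace.single i (1:ℝ)), u⟫_ℝ ^ 2 = 1 := by
          filter_upwards [ae_sphere ν hsupp] with u hu
          have h1 : ∀ i : Fin d, ⟪(EuclideanSpace.single i (1:ℝ)), u⟫_ℝ = u i := by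
            intro i
            simp [EuclideanSpace.inner_single_left]
          simp_rw [h1]
          have h2 : ‖u‖ ^ 2 = ∑ i, u i ^ 2 := by
            rw [← real_inner_self_eq_norm_sq]
            simp only [PiLp.inner_apply, RCLike.inner_apply, conj_trivial, sq]
          rw [← h2, hu, one_pow]
        rw [integral_congr_ae this, integral_const]
        simp
      calc (d:ℝ) * ∫ u, ⟪a, u⟫_ℝ ^ 2 ∂ν
          = ∑ _i : Fin d, ∫ u, ⟪a, u⟫_ℝ ^ 2 ∂ν := by
            rw [Finset.sum_const, Finset.card_univ, Fintype.card_fin, nsmul_eq_mul]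
        _ = ∑ i : Fin d, ∫ u, ⟪(EuclideanSpace.single i (1:ℝ)), u⟫_ℝ ^ 2 ∂ν :=
            Finset.sum_congr rfl (fun i _ => (basis_eq i).symm)
        _ = 1 := hsum
    have hdpos : (0:ℝ) < d := by exact_mod_cast hd
    have hI : ∫ u, ⟪a, u⟫_ℝ ^ 2 ∂ν = 1 / (d:ℝ) := by
      rw [mul_comm] at key
      exact (eq_div_iff hdpos.ne').mpr key
    rw [hI]
    ring


set_option maxHeartbeats 1000000 in
/-- Localized weak-`L_p` tail bound for the noiseless two-point directional
signal `D_μ f(x,u)`, where `u` is uniform on the unit sphere. -/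
theorem directional_signal_tail {d : ℕ}
    (f : EuclideanSpace ℝ (Fin d) → ℝ) (L Δ μs : ℝ) (hL : 0 < L) (hΔ : 0 < Δ)
    (hμs : 0 < μs)
    (hdiff : Differentiable ℝ f)
    (hLip : ∀ x y, ‖gradient f x - gradient f y‖ ≤ L * ‖x - y‖)
    (hbdd : BddBelow (Set.range f))
    (x : EuclideanSpace ℝ (Fin d))
    (hx : f x - sInf (Set.range f) ≤ 4 * Δ)
    (ν : Measure (EuclideanSpace ℝ (Fin d))) [IsProbabilityMeasure ν]
    (hsupp : ν (Metric.sphere (0 : EuclideanSpace ℝ (Fin d)) 1) = 1)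
    (hrot : ∀ O : (EuclideanSpace ℝ (Fin d)) ≃ₗᵢ[ℝ] (EuclideanSpace ℝ (Fin d)),
      Measure.map O ν = ν)
    (p : ℝ) (hp1 : 1 < p) (hp2 : p ≤ 2)
    (s : ℝ) (hs : 1 ≤ s) :
    ν {u | (Real.sqrt (8 * L * Δ) / Real.sqrt d + L * μs) * s
        < |(f (x + μs • u) - f (x - μs • u)) / (2 * μs)|}
      ≤ ENNReal.ofReal (s ^ (-p)) := by
  classical
  have hd : 0 < d := by
    rcases Nat.eq_zero_or_pos d with hd0 | hd0
    · exfalso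
      subst hd0
      have hempty : (Metric.sphere (0 : EuclideanSpace ℝ (Fin 0)) 1) = ∅ := by
        ext u
        simp only [Metric.mem_sphere, Set.mem_empty_iff_false, iff_false]
        rw [Subsingleton.elim u 0]
        simp
      rw [hempty] at hsupp
      simp at hsupp
    · exact hd0
  set g := gradient f x with hgdef
  have hg8 : ‖g‖ ^ 2 ≤ 8 * L * Δ := by
    have h1 := my_gradsq f L hL hdiff hLip hbdd x
    nlinarith [hL.le]
  set c0 := Real.sqrt (8 * L * Δ) / Real.sqrt d with hc0def
  have h8 : (0:ℝ) < 8 * L * Δ := by positivity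
  have hdR : (0:ℝ) < d := by exact_mod_cast hd
  have hc0 : 0 < c0 := div_pos (Real.sqrt_pos.2 h8) (Real.sqrt_pos.2 hdR)
  have hc0sq : c0 ^ 2 = 8 * L * Δ / d := by
    rw [hc0def, div_pow, Real.sq_sqrt h8.le, Real.sq_sqrt hdR.le]
  have hspos : (0:ℝ) < s := lt_of_lt_of_le one_pos hs
  have h2μ : (0:ℝ) < 2 * μs := by linarith
  -- Step B : smoothing error bound on the sphere
  have hB : ∀ u : EuclideanSpace ℝ (Fin d), ‖u‖ = 1 →
      |(f (x + μs • u) - f (x - μs • u)) / (2 * μs) - ⟪g, u⟫_ℝ| ≤ L * μs / 2 := by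
    intro u hu
    have t1 := my_taylor f L hL.le hdiff hLip x (μs • u)
    have t2 := my_taylor f L hL.le hdiff hLip x (-(μs • u))
    rw [show x + -(μs • u) = x - μs • u by abel] at t2
    have hi1 : ⟪g, μs • u⟫_ℝ = μs * ⟪g, u⟫_ℝ := real_inner_smul_right g u μs
    have hi2 : ⟪g, -(μs • u)⟫_ℝ = -(μs * ⟪g, u⟫_ℝ) := by rw [inner_neg_right, hi1]
    have hn : ‖μs • u‖ ^ 2 = μs ^ 2 := by
      rw [norm_smul, Real.norm_eq_abs, abs_of_pos hμs, hu]; ring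
    rw [hi1, hn] at t1
    rw [hi2, norm_neg, hn] at t2
    have e1 := abs_le.1 t1
    have e2 := abs_le.1 t2
    have habs : |(f (x + μs • u) - f (x - μs • u)) - 2 * μs * ⟪g, u⟫_ℝ| ≤ L * μs ^ 2 := by
      rw [abs_le]
      constructor <;> linarith [e1.1, e1.2, e2.1, e2.2]
    have hre : (f (x + μs • u) - f (x - μs • u)) / (2 * μs) - ⟪g, u⟫_ℝ
        = ((f (x + μs • u) - f (x - μs • u)) - 2 * μs * ⟪g, u⟫_ℝ) / (2 * μs) := by
      field_simp
    rw [hre, abs_div, abs_of_pos h2μ, div_le_iff₀ h2μ]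
    calc |(f (x + μs • u) - f (x - μs • u)) - 2 * μs * ⟪g, u⟫_ℝ| ≤ L * μs ^ 2 := habs
      _ = L * μs / 2 * (2 * μs) := by ring
  -- Step: event inclusion (a.e.)
  have step1 : ν {u | (c0 + L * μs) * s
        < |(f (x + μs • u) - f (x - μs • u)) / (2 * μs)|}
      ≤ ν {u | c0 ^ 2 * s ^ 2 ≤ ⟪g, u⟫_ℝ ^ 2} := by
    apply measure_mono_ae
    filter_upwards [ae_sphere ν hsupp] with u hu hmem
    have hmem' : (c0 + L * μs) * s
        < |(f (x + μs • u) - f (x - μs • u)) / (2 * μs)| := hmem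
    show c0 ^ 2 * s ^ 2 ≤ ⟪g, u⟫_ℝ ^ 2
    have hb := hB u hu
    have h1 : c0 * s < |⟪g, u⟫_ℝ| := by
      have hD : |(f (x + μs • u) - f (x - μs • u)) / (2 * μs)|
          ≤ |⟪g, u⟫_ℝ| + L * μs / 2 := by
        have := abs_add_le (⟪g, u⟫_ℝ)
          ((f (x + μs • u) - f (x - μs • u)) / (2 * μs) - ⟪g, u⟫_ℝ)
        simp only [add_sub_cancel] at this
        linarith [hb]
      nlinarith [hmem', mul_pos (mul_pos hL hμs) hspos, mul_pos hL hμs]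
    have h2 : 0 ≤ c0 * s := (mul_pos hc0 hspos).le
    nlinarith [sq_abs (⟪g, u⟫_ℝ), mul_self_le_mul_self h2 h1.le]
  -- Step: Chebyshev
  have hY2int := integrable_inner_sq ν hsupp g
  have hmom := second_moment hd ν hsupp hrot g
  have hcheb := mul_meas_ge_le_integral_of_nonneg
    (Filter.Eventually.of_forall (fun u => sq_nonneg (⟪g, u⟫_ℝ))) hY2int (c0 ^ 2 * s ^ 2)
  rw [hmom] at hcheb
  have hεpos : (0:ℝ) < c0 ^ 2 * s ^ 2 := by positivity
  have htoReal : (ν {u | c0 ^ 2 * s ^ 2 ≤ ⟪g, u⟫_ℝ ^ 2}).toReal ≤ s ^ (-p) := by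
    have h1 : (ν {u | c0 ^ 2 * s ^ 2 ≤ ⟪g, u⟫_ℝ ^ 2}).toReal
        ≤ (‖g‖ ^ 2 / d) / (c0 ^ 2 * s ^ 2) := by
      rw [le_div_iff₀ hεpos]
      simp only [Measure.real] at hcheb
      linarith [hcheb]
    have h2 : (‖g‖ ^ 2 / d) / (c0 ^ 2 * s ^ 2) ≤ (s ^ 2)⁻¹ := by
      rw [hc0sq]
      calc (‖g‖ ^ 2 / d) / (8 * L * Δ / d * s ^ 2)
          ≤ (8 * L * Δ / d) / (8 * L * Δ / d * s ^ 2) := by gcongr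
        _ = (s ^ 2)⁻¹ := by field_simp
    have h3 : (s ^ 2)⁻¹ ≤ s ^ (-p) := by
      rw [Real.rpow_neg hspos.le]
      have hsp2 : s ^ p ≤ s ^ (2:ℝ) := Real.rpow_le_rpow_of_exponent_le hs hp2
      have hp2' : s ^ (2:ℝ) = s ^ 2 := by
        rw [show (2:ℝ) = ((2:ℕ):ℝ) by norm_num, Real.rpow_natCast]
      exact inv_anti₀ (Real.rpow_pos_of_pos hspos p) (hp2' ▸ hsp2)
    linarith
  refine le_trans step1 ?_
  rw [← ENNReal.ofReal_toReal (measure_ne_top ν _)]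
  exact ENNReal.ofReal_le_ofReal htoReal
end
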